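/- arXiv:1301.3270 — 4 statements merged into one kernel-verified Lean document; each statement's English description precedes it below -/
import Mathlib

section
/- Let p be a prime number and let r ≥ 1 be an integer. Then in ℤ[X,Y] one has the congruence (X+Y)^(p^r) ≡ X^(p^r) + Y^(p^r) + p·Φ(X^(p^(r−1)), Y^(p^(r−1))) modulo p², i.e. the polynomial (X+Y)^(p^r) − X^(p^r) − Y^(p^r) − p·Φ(X^(p^(r−1)), Y^(p^(r−1))) lies in p²·ℤ[X,Y]. -/
open MvPolynomial

private lemma freshman (p : ℕ) (Φ : MvPolynomial (Fin 2) ℤ)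
    (hΦ : (p : MvPolynomial (Fin 2) ℤ) * Φ = (X 0 + X 1) ^ p - X 0 ^ p - X 1 ^ p) :
    ∀ k : ℕ, (p : MvPolynomial (Fin 2) ℤ) ∣
      (X 0 + X 1) ^ p ^ k - (X 0 ^ p ^ k + X 1 ^ p ^ k) := by
  intro k
  induction k with
  | zero => simp
  | succ k ih =>
    have h1 : ((X 0 + X 1 : MvPolynomial (Fin 2) ℤ) ^ p ^ k - (X 0 ^ p ^ k + X 1 ^ p ^ k)) ∣
        ((X 0 + X 1) ^ p ^ k) ^ p - (X 0 ^ p ^ k + X 1 ^ p ^ k) ^ p :=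
      sub_dvd_pow_sub_pow _ _ p
    have h2 : (p : MvPolynomial (Fin 2) ℤ) ∣
        ((X 0 + X 1) ^ p ^ k) ^ p - (X 0 ^ p ^ k + X 1 ^ p ^ k) ^ p := ih.trans h1
    have h3 := congrArg (bind₁ (fun i : Fin 2 => X i ^ p ^ k : Fin 2 → MvPolynomial (Fin 2) ℤ)) hΦ
    simp only [map_mul, map_sub, map_add, map_pow, map_natCast, bind₁_X_right] at h3
    have key : (X 0 + X 1 : MvPolynomial (Fin 2) ℤ) ^ p ^ (k + 1) -
        (X 0 ^ p ^ (k + 1) + X 1 ^ p ^ (k + 1)) =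
        (((X 0 + X 1) ^ p ^ k) ^ p - (X 0 ^ p ^ k + X 1 ^ p ^ k) ^ p) +
        (p : MvPolynomial (Fin 2) ℤ) * bind₁ (fun i : Fin 2 => X i ^ p ^ k) Φ := by
      rw [h3, pow_succ, pow_mul, pow_mul, pow_mul]; ring
    rw [key]
    exact dvd_add h2 (Dvd.intro _ rfl)

/-- Let `p` be a prime and `r ≥ 1`. With `Φ ∈ ℤ[X,Y]` the unique polynomial
satisfying `p·Φ = (X+Y)^p − X^p − Y^p`, one has
`(X+Y)^(p^r) ≡ X^(p^r) + Y^(p^r) + p·Φ(X^(p^(r−1)), Y^(p^(r−1))) (mod p²)`. -/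
theorem congruence_mod_p_squared (p : ℕ) (hp : p.Prime) (r : ℕ) (hr : 1 ≤ r)
    (Φ : MvPolynomial (Fin 2) ℤ)
    (hΦ : (p : MvPolynomial (Fin 2) ℤ) * Φ = (X 0 + X 1) ^ p - X 0 ^ p - X 1 ^ p) :
    ∃ g : MvPolynomial (Fin 2) ℤ,
      (X 0 + X 1) ^ p ^ r - X 0 ^ p ^ r - X 1 ^ p ^ r -
        (p : MvPolynomial (Fin 2) ℤ) *
          (bind₁ (fun i : Fin 2 => X i ^ p ^ (r - 1)) Φ) =
      (p : MvPolynomial (Fin 2) ℤ) ^ 2 * g := by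
  set k := r - 1 with hk
  have hrk : r = k + 1 := (Nat.succ_pred_eq_of_pos hr).symm
  have hmod := freshman p Φ hΦ k
  have h2 := dvd_sub_pow_of_dvd_sub hmod 1
  rw [pow_one] at h2
  obtain ⟨g, hg⟩ := h2
  refine ⟨g, ?_⟩
  have h3 := congrArg (bind₁ (fun i : Fin 2 => X i ^ p ^ k : Fin 2 → MvPolynomial (Fin 2) ℤ)) hΦ
  simp only [map_mul, map_sub, map_add, map_pow, map_natCast, bind₁_X_right] at h3
  have key : (X 0 + X 1 : MvPolynomial (Fin 2) ℤ) ^ p ^ r - X 0 ^ p ^ r - X 1 ^ p ^ r -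
      (p : MvPolynomial (Fin 2) ℤ) * bind₁ (fun i : Fin 2 => X i ^ p ^ k) Φ =
      ((X 0 + X 1) ^ p ^ k) ^ p - (X 0 ^ p ^ k + X 1 ^ p ^ k) ^ p := by
    rw [h3, hrk, pow_succ, pow_mul, pow_mul, pow_mul]; ring
  rw [key, hg]
end

section
/- Let p be a prime number and let r ≥ 1 be an integer. Then c_r^ℤ(X,Y) ≡ Φ(X^(p^(r−1)), Y^(p^(r−1))) modulo p, i.e. the polynomial c_r^ℤ − Φ(X^(p^(r−1)), Y^(p^(r−1))) lies in p·ℤ[X,Y]. -/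
open MvPolynomial

/-- Let `p` be a prime and `r ≥ 1`. With `Φ` the unique polynomial satisfying
`p·Φ = (X+Y)^p − X^p − Y^p` and `c_r^ℤ` the unique polynomial satisfying
`p·c_r^ℤ = (X+Y)^(p^r) − X^(p^r) − Y^(p^r)`, one has
`c_r^ℤ ≡ Φ(X^(p^(r−1)), Y^(p^(r−1))) (mod p)`. -/
theorem crZ_congruent_to_twisted_Phi_mod_p (p : ℕ) (hp : p.Prime) (r : ℕ) (hr : 1 ≤ r)
    (Φ : MvPolynomial (Fin 2) ℤ)
    (hΦ : (p : MvPolynomial (Fin 2) ℤ) * Φ = (X 0 + X 1) ^ p - X 0 ^ p - X 1 ^ p)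
    (c : MvPolynomial (Fin 2) ℤ)
    (hc : (p : MvPolynomial (Fin 2) ℤ) * c =
      (X 0 + X 1) ^ p ^ r - X 0 ^ p ^ r - X 1 ^ p ^ r) :
    ∃ g : MvPolynomial (Fin 2) ℤ,
      c - bind₁ (fun i : Fin 2 => X i ^ p ^ (r - 1)) Φ =
        (p : MvPolynomial (Fin 2) ℤ) * g := by
  haveI : Fact p.Prime := ⟨hp⟩
  set q := p ^ (r - 1) with hq
  set A : MvPolynomial (Fin 2) ℤ := (X 0 + X 1) ^ q with hA
  set B : MvPolynomial (Fin 2) ℤ := X 0 ^ q + X 1 ^ q with hB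
  have hqp : p ^ r = q * p := by
    rw [hq, ← pow_succ, Nat.sub_add_cancel hr]
  -- A ≡ B mod p
  have hAB : (p : MvPolynomial (Fin 2) ℤ) ∣ A - B := by
    have := (C_dvd_iff_zmod (σ := Fin 2) p (A - B)).2 ?_
    · simpa using this
    · simp only [hA, hB, map_sub, map_add, map_pow, map_X, hq]
      rw [add_pow_char_pow]
      ring
  -- p^2 ∣ A^p - B^p
  have key : ((p : MvPolynomial (Fin 2) ℤ)) ^ 2 ∣ A ^ p - B ^ p := by
    simpa using dvd_sub_pow_of_dvd_sub hAB 1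
  obtain ⟨g, hg⟩ := key
  refine ⟨g, ?_⟩
  have hΦ' : (p : MvPolynomial (Fin 2) ℤ) * bind₁ (fun i : Fin 2 => X i ^ q) Φ =
      B ^ p - X 0 ^ p ^ r - X 1 ^ p ^ r := by
    have := congrArg (bind₁ (fun i : Fin 2 => X i ^ q)) hΦ
    simp only [map_sub, map_add, map_mul, map_pow, bind₁_X_right, map_natCast] at this
    rw [this, hB, hqp, pow_mul, pow_mul]
  have hmain : (p : MvPolynomial (Fin 2) ℤ) *
      (c - bind₁ (fun i : Fin 2 => X i ^ q) Φ) =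
      (p : MvPolynomial (Fin 2) ℤ) * ((p : MvPolynomial (Fin 2) ℤ) * g) := by
    rw [mul_sub, hc, hΦ', ← mul_assoc, ← sq, ← hg, hqp, pow_mul, hA]
    ring
  have hp0 : (p : MvPolynomial (Fin 2) ℤ) ≠ 0 := by
    exact_mod_cast Nat.cast_ne_zero.2 hp.ne_zero
  exact mul_left_cancel₀ hp0 hmain
end

section
/- Let k be a commutative ring. The coordinate ring of the group scheme SL₂ over k, namely the quotient k[a,b,c,d]/(ad − bc − 1) of the polynomial ring in four variables by the ideal generated by ad − bc − 1, is a free k-module. -/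
/-!
For the lexicographic monomial order, the leading term of `ad − bc − 1` is `ad`, with
coefficient `1`. Whenever the leading coefficient of `f` is a unit, division with remainder by `f`
shows that the monomials not divisible by the leading monomial of `f` span `R[σ] ⧸ (f)`, and they
are linearly independent there because every nonzero multiple of `f` has a leading monomial
divisible by that of `f`. So `k[SL₂]` is free on the monomials not divisible by `ad`.
-/

open MvPolynomial MonomialOrder

namespace MonomialOrder

variable {σ R : Type*} [CommRing R] (m : MonomialOrder σ) {f : MvPolynomial σ R}

theorem eq_zero_of_mem_span_singleton_of_mem_restrictSupport (hf : IsUnit (m.leadingCoeff f))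
    {r : MvPolynomial σ R} (hr : r ∈ restrictSupport R {c | ¬ m.degree f ≤ c})
    (hrf : r ∈ Ideal.span {f}) : r = 0 := by
  obtain ⟨q, rfl⟩ := Ideal.mem_span_singleton'.mp hrf
  by_contra hqf
  have hq : q ≠ 0 := by rintro rfl; exact hqf (zero_mul f)
  have hdeg : m.degree (q * f) = m.degree q + m.degree f :=
    m.degree_mul_of_isRegular_right hq hf.isRegular
  exact hr (m.degree_mem_support hqf) (hdeg ▸ le_add_self)

theorem exists_mem_restrictSupport_sub_mem_span_singleton (hf : IsUnit (m.leadingCoeff f))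
    (p : MvPolynomial σ R) :
    ∃ r ∈ restrictSupport R {c | ¬ m.degree f ≤ c}, p - r ∈ Ideal.span {f} := by
  obtain ⟨g, r, rfl, -, hr⟩ := m.div_single hf p
  exact ⟨r, hr, by simpa using Ideal.mul_mem_left _ g (Ideal.mem_span_singleton_self f)⟩

theorem free_quotient_span_singleton (hf : IsUnit (m.leadingCoeff f)) :
    Module.Free R (MvPolynomial σ R ⧸ Ideal.span {f}) := by
  let S := restrictSupport R {c | ¬ m.degree f ≤ c}
  let π : S →ₗ[R] MvPolynomial σ R ⧸ Ideal.span {f} :=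
    (Ideal.Quotient.mkₐ R (Ideal.span {f})).toLinearMap ∘ₗ S.subtype
  have hπ : Function.Bijective π := by
    refine ⟨(injective_iff_map_eq_zero π).mpr fun r hr => Subtype.ext ?_, fun p => ?_⟩
    · exact m.eq_zero_of_mem_span_singleton_of_mem_restrictSupport hf r.2
        (Ideal.Quotient.eq_zero_iff_mem.mp hr)
    · obtain ⟨p, rfl⟩ := Ideal.Quotient.mk_surjective p
      obtain ⟨r, hr, hpr⟩ := m.exists_mem_restrictSupport_sub_mem_span_singleton hf p
      exact ⟨⟨r, hr⟩, (Ideal.Quotient.eq.mpr hpr).symm⟩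
  have : Module.Free R S := .of_basis (basisRestrictSupport R _)
  exact .of_equiv (LinearEquiv.ofBijective π hπ)

end MonomialOrder

theorem monic_lex_det_sub_one (k : Type*) [CommRing k] :
    (lex : MonomialOrder (Fin 4)).Monic ((X 0 : MvPolynomial (Fin 4) k) * X 3 - X 1 * X 2 - 1) := by
  nontriviality k using monic_of_subsingleton
  set m : MonomialOrder (Fin 4) := lex
  have hmonic : m.Monic ((X 0 : MvPolynomial (Fin 4) k) * X 3) := m.monic_X.mul m.monic_X
  have hdeg : m.degree ((X 0 : MvPolynomial (Fin 4) k) * X 3) = .single 0 1 + .single 3 1 := by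
    rw [m.degree_mul_of_isRegular_left (by rw [m.leadingCoeff_X]; exact isRegular_one)
      (X_ne_zero _), m.degree_X, m.degree_X]
  have hlt :
      m.degree ((X 1 : MvPolynomial (Fin 4) k) * X 2 + 1) ≺[m] .single 0 1 + .single 3 1 := by
    refine lt_of_le_of_lt m.degree_add_le (max_lt (lt_of_le_of_lt m.degree_mul_le ?_) ?_)
    · rw [m.degree_X, m.degree_X, lex_lt_iff]
      exact ⟨0, by simp⟩
    · rw [m.degree_one, lex_lt_iff]
      exact ⟨0, by simp⟩
  rw [sub_sub, Monic, m.leadingCoeff_sub_of_lt (hdeg ▸ hlt), hmonic.leadingCoeff_eq_one]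

/-- For any commutative ring `k`, the coordinate ring
`k[SL₂] = k[a,b,c,d]/(ad − bc − 1)` of the group scheme `SL₂` over `k`
is a free `k`-module. -/
theorem coordinateRing_SL2_free (k : Type*) [CommRing k] :
    Module.Free k
      (MvPolynomial (Fin 4) k ⧸
        Ideal.span {(X 0 : MvPolynomial (Fin 4) k) * X 3 - X 1 * X 2 - 1}) :=
  lex.free_quotient_span_singleton ((monic_lex_det_sub_one k).leadingCoeff_eq_one ▸ isUnit_one)
end

section
/- Let k be a commutative ring and let R be a commutative k-algebra equipped with an ℕ-grading R = ⊕_{n≥0} R_n as a k-algebra (each R_n a k-submodule with R_m·R_n ⊆ R_{m+n} and the image of k contained in R₀). Let t ∈ R₁ be a homogeneous element of degree 1. If the quotient algebra R/tR is a finitely generated k-algebra, then R is a finitely generated k-algebra. -/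
/-!
Lift generators of `R/tR` to `R` and replace them by their homogeneous components; together
with `t` they generate a subalgebra `B` that is closed under taking homogeneous components and
satisfies `R = B + tR`. Then `B` contains every homogeneous element, by strong induction on the
degree: for `x ∈ Rₙ` write `x = b + t y`; taking degree-`n` parts gives `x = bₙ + t yₙ₋₁`, and
`yₙ₋₁ ∈ B` by induction since `t` has positive degree.
-/

open DirectSum SetLike

theorem Algebra.isHomogeneous_adjoin {ι k R : Type*} [AddMonoid ι] [DecidableEq ι]
    [CommSemiring k] [Semiring R] [Algebra k R] (𝒜 : ι → Submodule k R) [GradedAlgebra 𝒜]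
    {s : Set R} (hs : ∀ x ∈ s, IsHomogeneousElem 𝒜 x) :
    IsHomogeneous 𝒜 (Algebra.adjoin k s) := by
  have h := IsHomogeneous.subsemiringClosure_of_isHomogeneousElem (𝒜 := 𝒜)
    (s := Set.range (algebraMap k R) ∪ s) <| by
      rintro _ (⟨c, rfl⟩ | hx)
      exacts [⟨0, algebraMap_mem_graded 𝒜 c⟩, hs _ hx]
  rw [← Algebra.adjoin_toSubsemiring] at h
  exact h

theorem exists_finset_isHomogeneousElem_subset_adjoin {ι k R : Type*} [AddMonoid ι]
    [DecidableEq ι] [CommSemiring k] [Semiring R] [Algebra k R] (𝒜 : ι → Submodule k R)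
    [GradedAlgebra 𝒜] (F : Finset R) :
    ∃ s : Finset R, (∀ x ∈ s, IsHomogeneousElem 𝒜 x) ∧
      (F : Set R) ⊆ Algebra.adjoin k (s : Set R) := by
  classical
  refine ⟨F.biUnion fun x ↦ (decompose 𝒜 x).support.image fun i ↦ (decompose 𝒜 x i : R),
    by simpa using fun _ _ _ i _ h ↦ h ▸ ⟨i, Submodule.coe_mem _⟩, fun x hx ↦ ?_⟩
  rw [← sum_support_decompose 𝒜 x]
  exact sum_mem fun i hi ↦ Algebra.subset_adjoin <| by
    simpa using ⟨x, hx, i, DFinsupp.mem_support_iff.mp hi, rfl⟩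

theorem Subalgebra.eq_top_of_isHomogeneous_of_map_eq_top {k R : Type*} [CommSemiring k]
    [CommRing R] [Algebra k R] {𝒜 : ℕ → Submodule k R} [GradedAlgebra 𝒜] {B : Subalgebra k R}
    (hB : IsHomogeneous 𝒜 B) {d : ℕ} (hd : 0 < d) {t : R} (ht : t ∈ 𝒜 d) (htB : t ∈ B)
    (hmap : B.map (Ideal.Quotient.mkₐ k (Ideal.span {t})) = ⊤) : B = ⊤ := by
  classical
  have hsplit : ∀ x : R, ∃ b ∈ B, ∃ y, x = b + t * y := by
    intro x
    obtain ⟨b, hb, hbx⟩ := hmap.ge (Algebra.mem_top : Ideal.Quotient.mkₐ k _ x ∈ ⊤)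
    obtain ⟨y, hy⟩ := Ideal.mem_span_singleton'.mp (Ideal.Quotient.eq.mp hbx.symm)
    exact ⟨b, hb, y, by linear_combination -hy⟩
  have hgraded : ∀ n, ∀ x ∈ 𝒜 n, x ∈ B := by
    intro n
    induction n using Nat.strong_induction_on with
    | _ n ih =>
      intro x hx
      obtain ⟨b, hb, y, rfl⟩ := hsplit x
      rw [← decompose_of_mem_same 𝒜 hx, decompose_add, DirectSum.add_apply, Submodule.coe_add]
      refine add_mem (hB n hb) ?_
      by_cases hdn : d ≤ n
      · rw [coe_decompose_mul_of_left_mem_of_le 𝒜 ht hdn]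
        exact mul_mem htB (ih _ (by omega) _ (Submodule.coe_mem _))
      · rw [coe_decompose_mul_of_left_mem_of_not_le 𝒜 ht hdn]
        exact zero_mem _
  rw [eq_top_iff]
  rintro x -
  induction x using Decomposition.inductionOn 𝒜 with
  | zero => exact zero_mem _
  | homogeneous m => exact hgraded _ _ m.2
  | add _ _ h₁ h₂ => exact add_mem h₁ h₂

theorem exists_finset_isHomogeneousElem_map_adjoin_eq_top {ι k R Q : Type*} [AddMonoid ι]
    [DecidableEq ι] [CommSemiring k] [Semiring R] [Algebra k R] (𝒜 : ι → Submodule k R)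
    [GradedAlgebra 𝒜] [Semiring Q] [Algebra k Q] [Algebra.FiniteType k Q] {f : R →ₐ[k] Q}
    (hf : Function.Surjective f) :
    ∃ s : Finset R, (∀ x ∈ s, IsHomogeneousElem 𝒜 x) ∧
      (Algebra.adjoin k (s : Set R)).map f = ⊤ := by
  classical
  obtain ⟨T, hT⟩ := Algebra.FiniteType.out (R := k) (A := Q)
  obtain ⟨F, -, rfl⟩ := (Finset.subset_set_image_iff (s := Set.univ) (t := T) (f := f)).mp <| by
    simp [hf.range_eq]
  obtain ⟨s, hs, hFs⟩ := exists_finset_isHomogeneousElem_subset_adjoin 𝒜 F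
  refine ⟨s, hs, top_le_iff.mp ?_⟩
  rw [← hT, Finset.coe_image, Algebra.adjoin_image]
  exact Subalgebra.map_mono (Algebra.adjoin_le hFs)

/-- Let `k` be a commutative ring and `R` a commutative `k`-algebra with an
`ℕ`-grading `R = ⊕ₙ Rₙ` by `k`-submodules (so `Rₘ·Rₙ ⊆ R_{m+n}` and the image
of `k` lies in `R₀`). Let `t ∈ R₁`. If `R/tR` is a finitely generated
`k`-algebra, then `R` is a finitely generated `k`-algebra. -/
theorem finiteType_of_quotient_by_degree_one (k R : Type*) [CommRing k] [CommRing R]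
    [Algebra k R] (𝒜 : ℕ → Submodule k R) [GradedAlgebra 𝒜]
    (t : R) (ht : t ∈ 𝒜 1)
    (hquot : Algebra.FiniteType k (R ⧸ Ideal.span {t})) :
    Algebra.FiniteType k R := by
  classical
  obtain ⟨s, hs, hmap⟩ := exists_finset_isHomogeneousElem_map_adjoin_eq_top 𝒜
    (Ideal.Quotient.mkₐ_surjective k (Ideal.span {t}))
  have hgen : Algebra.adjoin k ((insert t s : Finset R) : Set R) = ⊤ := by
    rw [Finset.coe_insert]
    refine Subalgebra.eq_top_of_isHomogeneous_of_map_eq_top ?_ one_pos ht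
      (Algebra.subset_adjoin (Set.mem_insert t _)) (top_le_iff.mp ?_)
    · exact Algebra.isHomogeneous_adjoin 𝒜 (Set.forall_mem_insert.mpr ⟨⟨1, ht⟩, hs⟩)
    · exact hmap ▸ Subalgebra.map_mono (Algebra.adjoin_mono (Set.subset_insert t _))
  exact ⟨insert t s, hgen⟩
end
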